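/- arXiv:1111.4543 — 2 statements merged into one kernel-verified Lean document; each statement's English description precedes it below -/
import Mathlib

section
/- Let M be a locally analytic representation of the group of matrices [[p^Z, Q_p],[0,1]] on an L-vector space, and let u^+ denote the infinitesimal action of the unipotent subgroup U = [[1, Q_p],[0,1]]. If M^{u^+=0} is finite-dimensional over L, then M^{u^+=0} = M^U, i.e., every vector killed by u^+ is invariant under all of U. -/
/-!
STATEMENT 5: Let `M` be a locally analytic `L`-representation of the group
`[[p^ℤ, ℚ_p],[0,1]]`, with `u⁺` the infinitesimal action of the unipotent
subgroup `U = [[1,ℚ_p],[0,1]]`.  If `M^{u⁺=0}` is finite dimensional over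
`L` then `M^{u⁺=0} = M^U`.

We formalize the representation by the operators `U b` (action of
`[[1,b],[0,1]]`) and `A k` (action of `diag(p^k,1)`), subject to the group
relations, together with:
* the consequence of local analyticity that a vector killed by `u⁺` is fixed
  by a small subgroup `[[1,p^nℤ_p],[0,1]]` of `U`;
* the fact that `u⁺` is the infinitesimal action of `U` (so `U`-invariant
  vectors are killed by `u⁺`, and `ker u⁺` is stable under the `A k`).
-/

variable (p : ℕ) [Fact p.Prime]
variable {L : Type*} [Field L]
variable {M : Type*} [AddCommGroup M] [Module L M]

theorem ker_uplus_eq_U_invariants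
    (uplus : Module.End L M)
    (U : ℚ_[p] → Module.End L M) (A : ℤ → Module.End L M)
    -- group relations in [[p^ℤ, ℚ_p],[0,1]]:
    (hU : ∀ b b' : ℚ_[p], U (b + b') = U b ∘ₗ U b')
    (hA : ∀ k k' : ℤ, A (k + k') = A k ∘ₗ A k')
    (hA0 : A 0 = LinearMap.id)
    (hcomm : ∀ (k : ℤ) (b : ℚ_[p]), A k ∘ₗ U b = U ((p : ℚ_[p]) ^ k * b) ∘ₗ A k)
    -- `ker u⁺` is stable under the diagonal matrices `diag(p^k, 1)`:
    (hAker : ∀ (k : ℤ) (m : M), uplus m = 0 → uplus (A k m) = 0)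
    -- `M^{u⁺=0}` is finite dimensional:
    (hfin : FiniteDimensional L (LinearMap.ker uplus))
    -- local analyticity: a vector killed by `u⁺` is fixed by a small subgroup of `U`:
    (hloc : ∀ m : M, uplus m = 0 →
      ∃ n : ℕ, ∀ b : ℚ_[p], ‖b‖ ≤ (p : ℝ) ^ (-(n : ℤ)) → U b m = m)
    -- `u⁺` is the infinitesimal action of `U`:
    (hinf : ∀ m : M, (∀ b : ℚ_[p], U b m = m) → uplus m = 0) :
    ∀ m : M, uplus m = 0 ↔ ∀ b : ℚ_[p], U b m = m := by
  intro m
  constructor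
  · intro hm b
    -- Step 1: a uniform `N` working for all of `ker uplus`.
    obtain ⟨N, hN⟩ : ∃ N : ℕ, ∀ x : M, uplus x = 0 →
        ∀ c : ℚ_[p], ‖c‖ ≤ (p : ℝ) ^ (-(N : ℤ)) → U c x = x := by
      have bb := Module.finBasis L (LinearMap.ker uplus)
      choose n hn using fun i => hloc ((bb i : LinearMap.ker uplus) : M) (bb i).2
      refine ⟨Finset.univ.sup n, fun x hx c hc => ?_⟩
      have hp1 : (1 : ℝ) < (p : ℝ) := by
        exact_mod_cast (Fact.out : p.Prime).one_lt
      have hxmem : (⟨x, hx⟩ : LinearMap.ker uplus) ∈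
          Submodule.span L (Set.range bb) := by
        rw [bb.span_eq]; trivial
      have key : ∀ y ∈ Submodule.span L (Set.range bb), U c (y : M) = (y : M) := by
        intro y hy
        induction hy using Submodule.span_induction with
        | mem y hy =>
          obtain ⟨i, rfl⟩ := hy
          refine hn i c (hc.trans ?_)
          apply zpow_le_zpow_right₀ hp1.le
          simp only [neg_le_neg_iff]
          exact_mod_cast Finset.le_sup (Finset.mem_univ i)
        | zero => simp
        | add y z _ _ hy hz => simp [hy, hz]
        | smul t y _ hy => simp [hy]
      exact key ⟨x, hx⟩ hxmem
    -- Step 2: choose `k` so that `‖p^k * b‖ ≤ p^(-N)`.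
    have hp0 : (p : ℝ) ≠ 0 := by
      exact_mod_cast (Fact.out : p.Prime).ne_zero
    obtain ⟨k, hk⟩ : ∃ k : ℤ, ‖(p : ℚ_[p]) ^ k * b‖ ≤ (p : ℝ) ^ (-(N : ℤ)) := by
      by_cases hb : b = 0
      · exact ⟨0, by simp [hb]⟩
      · refine ⟨(N : ℤ) - b.valuation, ?_⟩
        have hppos : (0:ℝ) < (p:ℝ) := by positivity
        rw [norm_mul, norm_zpow, Padic.norm_p, Padic.norm_eq_zpow_neg_valuation hb,
          ← zpow_neg_one, ← zpow_mul, ← zpow_add₀ hp0]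
        apply le_of_eq
        congr 1
        ring
    -- Step 3: conjugate.
    have h1 : uplus (A k m) = 0 := hAker k m hm
    have h2 : U ((p : ℚ_[p]) ^ k * b) (A k m) = A k m := hN _ h1 _ hk
    have hpQ : ((p : ℚ_[p])) ≠ 0 := by
      exact_mod_cast (Fact.out : p.Prime).ne_zero
    have hAA : A (-k) (A k m) = m := by
      have := hA (-k) k
      simp only [neg_add_cancel, hA0] at this
      have := congrArg (fun f => f m) this
      simpa using this.symm
    have hconj : A (-k) (U ((p : ℚ_[p]) ^ k * b) (A k m)) = U b (A (-k) (A k m)) := by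
      have := hcomm (-k) ((p : ℚ_[p]) ^ k * b)
      have h3 : (p : ℚ_[p]) ^ (-k) * ((p : ℚ_[p]) ^ k * b) = b := by
        rw [← mul_assoc, zpow_neg, inv_mul_cancel₀ (zpow_ne_zero _ hpQ), one_mul]
      rw [h3] at this
      exact congrArg (fun f => f (A k m)) this
    calc U b m = U b (A (-k) (A k m)) := by rw [hAA]
    _ = A (-k) (U ((p : ℚ_[p]) ^ k * b) (A k m)) := hconj.symm
    _ = A (-k) (A k m) := by rw [h2]
    _ = m := hAA
  · exact hinf m
end

section
/- Let G = GL_2(Q_p) act on a module M with central character δ_D, and suppose z ∈ M satisfies: w·z is U-invariant ([[1,b],[0,1]]·(w·z) = w·z for all b), σ_{-1}·z = δ_1(-1)·z for a character δ_1, and [[1,1],[0,1]]·z corresponds to multiplication by (1+T). Then the matrix identity [[1,1],[0,1]]·w·[[-1,0],[0,-1]]·[[-1,0],[0,1]]·[[1,1],[0,1]]·w = w·[[1,1],[0,1]] applied to z yields w_D((1+T)·z) = δ_1(-1)·(1+T)·z, where w_D denotes the action of [[-1,0],[0,1]]∘w composed appropriately. -/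
/-!
STATEMENT 17: Let `G = GL₂(ℚ_p)` act (as a multiplicative monoid of
matrices) on an `L`-module `M` with central character `δ_D`, and suppose
`z ∈ M` satisfies: `w·z` is `U`-invariant (`[[1,b],[0,1]]·(w·z) = w·z` for
all `b`), and `σ_{-1}·z = δ₁(-1)·z` (where `σ_{-1}` acts via the matrix
`[[-1,0],[0,1]]`).  Then the matrix identity
`[[1,1],[0,1]]·w·[[-1,0],[0,-1]]·[[-1,0],[0,1]]·[[1,1],[0,1]]·w = w·[[1,1],[0,1]]`
applied to `z` yields `w_D((1+T)·z) = δ₁(-1)·(1+T)·z`, where `(1+T)·`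
corresponds to the action of `[[1,1],[0,1]]` and `w_D` to the action of
`w`.
-/

variable {p : ℕ} [Fact p.Prime]
variable {L : Type*} [Field L]
variable {M : Type*} [AddCommGroup M] [Module L M]

theorem wD_on_one_add_T
    (ρ : Matrix (Fin 2) (Fin 2) ℚ_[p] →* Module.End L M)
    (δD δ1 : ℚ_[p]ˣ →* Lˣ) (z : M)
    -- central character `δ_D`:
    (hcen : ∀ m : M, ρ (-1 : Matrix (Fin 2) (Fin 2) ℚ_[p]) m =
      ((δD (-1) : Lˣ) : L) • m)
    -- `w·z` is `U`-invariant: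
    (hU : ∀ b : ℚ_[p], ρ !![1, b; 0, 1] (ρ !![0, 1; 1, 0] z) = ρ !![0, 1; 1, 0] z)
    -- `σ_{-1}·z = δ₁(-1)·z`:
    (hS : ρ !![-1, 0; 0, 1] z = ((δ1 (-1) : Lˣ) : L) • z) :
    -- conclusion: `w_D((1+T)·z) = δ₁(-1)·(1+T)·z`
    ρ !![0, 1; 1, 0] (ρ !![1, 1; 0, 1] z) =
      ((δ1 (-1) : Lˣ) : L) • ρ !![1, 1; 0, 1] z := by
  have comp : ∀ (A B : Matrix (Fin 2) (Fin 2) ℚ_[p]) (m : M),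
      ρ (A * B) m = ρ A (ρ B m) := by
    intro A B m; rw [map_mul]; rfl
  have hww : ∀ m : M, ρ !![0, 1; 1, 0] (ρ !![0, 1; 1, 0] m) = m := by
    intro m
    rw [← comp]
    have h : (!![0, 1; 1, 0] : Matrix (Fin 2) (Fin 2) ℚ_[p]) * !![0, 1; 1, 0] = 1 := by
      simp [Matrix.mul_fin_two, Matrix.one_fin_two]
    rw [h, map_one]; rfl
  have key : (!![0, 1; 1, 0] : Matrix (Fin 2) (Fin 2) ℚ_[p]) * !![1, 1; 0, 1]
      = !![1, 1; 0, 1] * (!![0, 1; 1, 0] * (!![1, 0; 0, -1] *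
        (!![1, 1; 0, 1] * !![0, 1; 1, 0]))) := by
    simp [Matrix.mul_fin_two]
  have swap : (!![1, 0; 0, -1] : Matrix (Fin 2) (Fin 2) ℚ_[p]) * !![0, 1; 1, 0]
      = !![0, 1; 1, 0] * !![-1, 0; 0, 1] := by
    simp [Matrix.mul_fin_two]
  calc ρ !![0, 1; 1, 0] (ρ !![1, 1; 0, 1] z)
      = ρ (!![0, 1; 1, 0] * !![1, 1; 0, 1]) z := (comp _ _ _).symm
    _ = ρ !![1, 1; 0, 1] (ρ !![0, 1; 1, 0] (ρ !![1, 0; 0, -1]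
          (ρ !![1, 1; 0, 1] (ρ !![0, 1; 1, 0] z)))) := by
        rw [key, comp, comp, comp, comp]
    _ = ρ !![1, 1; 0, 1] (ρ !![0, 1; 1, 0] (ρ !![1, 0; 0, -1]
          (ρ !![0, 1; 1, 0] z))) := by rw [hU 1]
    _ = ρ !![1, 1; 0, 1] (ρ !![0, 1; 1, 0] (ρ !![0, 1; 1, 0]
          (ρ !![-1, 0; 0, 1] z))) := by rw [← comp !![1, 0; 0, -1] !![0, 1; 1, 0], swap, comp]
    _ = ρ !![1, 1; 0, 1] (ρ !![-1, 0; 0, 1] z) := by rw [hww]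
    _ = ρ !![1, 1; 0, 1] (((δ1 (-1) : Lˣ) : L) • z) := by rw [hS]
    _ = ((δ1 (-1) : Lˣ) : L) • ρ !![1, 1; 0, 1] z := map_smul _ _ _
end
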